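/- A formula A is assertible in every strict finitistic model if and only if A is a classical tautology, i.e., A is true under every classical (Boolean) valuation of the variables. -/

import Mathlib

/-- Propositional formulas over a countably infinite set of variables (indexed by ℕ). -/
inductive Fm : Type
  | bot : Fm
  | var : ℕ → Fm
  | and : Fm → Fm → Fm
  | or : Fm → Fm → Fm
  | imp : Fm → Fm → Fm

/-- ¬A abbreviates A → ⊥. -/
def Fm.neg (A : Fm) : Fm := Fm.imp A Fm.bot

/-- ¬¬A. -/
def Fm.dneg (A : Fm) : Fm := (Fm.imp A Fm.bot).imp Fm.bot

/-- A strict finitistic model: a rooted tree (a partial order with minimum whose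
sets of predecessors are linearly ordered), finitely branching, all of whose
branches (chains) are of at most countable length, with an upward-closed valuation
satisfying the finite verification condition and the atomic prevalence condition. -/
structure SFModel where
  K : Type
  le : K → K → Prop
  le_refl : ∀ k, le k k
  le_antisymm : ∀ k l, le k l → le l k → k = l
  le_trans : ∀ k l m, le k l → le l m → le k m
  root : K
  root_le : ∀ k, le root k
  pred_linear : ∀ k l m, le l k → le m k → le l m ∨ le m l
  finitely_branching :
    ∀ k, {l | le k l ∧ k ≠ l ∧ ∀ m, le k m → le m l → m = k ∨ m = l}.Finite
  branches_countable :
    ∀ C : Set K, (∀ x ∈ C, ∀ y ∈ C, le x y ∨ le y x) → C.Countable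
  val : ℕ → Set K
  val_up : ∀ p k l, le k l → k ∈ val p → l ∈ val p
  fin_verif : ∀ k, {p | k ∈ val p}.Finite
  atomic_prev : ∀ p, (∃ k, k ∈ val p) → ∀ l, ∃ l', le l l' ∧ l' ∈ val p

/-- Strict finitistic forcing at a node of a strict finitistic model. -/
def Force (W : SFModel) : W.K → Fm → Prop
  | _, Fm.bot => False
  | k, Fm.var p => k ∈ W.val p
  | k, Fm.and A B => Force W k A ∧ Force W k B
  | k, Fm.or A B => Force W k A ∨ Force W k B
  | k, Fm.imp A B =>
      ∀ k', W.le k k' → Force W k' A → ∃ k'', W.le k' k'' ∧ Force W k'' B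

/-- A is valid in W: every node forces A. -/
def Valid (W : SFModel) (A : Fm) : Prop := ∀ k, Force W k A

/-- A is assertible in W: some node forces A. -/
def Assertible (W : SFModel) (A : Fm) : Prop := ∃ k, Force W k A

/-- A is prevalent in W: above every node some node forces A. -/
def Prevalent (W : SFModel) (A : Fm) : Prop := ∀ k, ∃ k', W.le k k' ∧ Force W k' A

/-- Classical Boolean evaluation of a formula under a Boolean valuation of the
variables, with ⊥ evaluated as false. -/
def clEval (u : ℕ → Bool) : Fm → Bool
  | Fm.bot => false
  | Fm.var p => u p
  | Fm.and A B => clEval u A && clEval u B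
  | Fm.or A B => clEval u A || clEval u B
  | Fm.imp A B => !(clEval u A) || clEval u B

open Classical

/-- Variables occurring in a formula. -/
def Fm.vars : Fm → Finset ℕ
  | .bot => ∅
  | .var p => {p}
  | .and A B => A.vars ∪ B.vars
  | .or A B => A.vars ∪ B.vars
  | .imp A B => A.vars ∪ B.vars

lemma clEval_congr (u u' : ℕ → Bool) (B : Fm) (h : ∀ p ∈ B.vars, u p = u' p) :
    clEval u B = clEval u' B := by
  induction B with
  | bot => rfl
  | var p => exact h p (by simp [Fm.vars])
  | and A B ihA ihB =>
      simp only [clEval]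
      rw [ihA (fun p hp => h p (by simp [Fm.vars, hp])),
        ihB (fun p hp => h p (by simp [Fm.vars, hp]))]
  | or A B ihA ihB =>
      simp only [clEval]
      rw [ihA (fun p hp => h p (by simp [Fm.vars, hp])),
        ihB (fun p hp => h p (by simp [Fm.vars, hp]))]
  | imp A B ihA ihB =>
      simp only [clEval]
      rw [ihA (fun p hp => h p (by simp [Fm.vars, hp])),
        ihB (fun p hp => h p (by simp [Fm.vars, hp]))]

lemma force_mono (W : SFModel) (B : Fm) :
    ∀ k l, W.le k l → Force W k B → Force W l B := by
  induction B with
  | bot => intro k l _ h; exact h.elim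
  | var p => intro k l hkl h; exact W.val_up p k l hkl h
  | and A B ihA ihB =>
      intro k l hkl h
      exact ⟨ihA k l hkl h.1, ihB k l hkl h.2⟩
  | or A B ihA ihB =>
      intro k l hkl h
      exact h.elim (fun ha => Or.inl (ihA k l hkl ha)) (fun hb => Or.inr (ihB k l hkl hb))
  | imp A B _ _ =>
      intro k l hkl h k' hlk' ha
      exact h k' (W.le_trans k l k' hkl hlk') ha

/-- Key lemma: with `u p` recording nonemptiness of `val p`, classically true
formulas are prevalent and classically false formulas are nowhere forced. -/
lemma key_prevalence (W : SFModel) (u : ℕ → Bool)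
    (hu : ∀ p, u p = true ↔ ∃ k, k ∈ W.val p) (B : Fm) :
    (clEval u B = true → Prevalent W B) ∧
    (clEval u B = false → ∀ k, ¬ Force W k B) := by
  induction B with
  | bot =>
      refine ⟨fun h => by simp [clEval] at h, fun _ k hk => hk⟩
  | var p =>
      constructor
      · intro h k
        exact W.atomic_prev p ((hu p).1 h) k
      · intro h k hk
        have : u p = true := (hu p).2 ⟨k, hk⟩
        simp [clEval, this] at h
  | and A B ihA ihB =>
      constructor
      · intro h k
        have hAB : clEval u A = true ∧ clEval u B = true := by simpa [clEval] using h
        obtain ⟨k1, hk1, hfA⟩ := ihA.1 hAB.1 k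
        obtain ⟨k2, hk2, hfB⟩ := ihB.1 hAB.2 k1
        exact ⟨k2, W.le_trans k k1 k2 hk1 hk2, force_mono W A k1 k2 hk2 hfA, hfB⟩
      · intro h k hk
        by_cases hA : clEval u A = true
        · have hB : clEval u B = false := by simpa [clEval, hA] using h
          exact ihB.2 hB k hk.2
        · exact ihA.2 (by simpa using hA) k hk.1
  | or A B ihA ihB =>
      constructor
      · intro h k
        rcases (by simpa [clEval] using h : clEval u A = true ∨ clEval u B = true) with hA | hB
        · obtain ⟨k', hk', hf⟩ := ihA.1 hA k
          exact ⟨k', hk', Or.inl hf⟩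
        · obtain ⟨k', hk', hf⟩ := ihB.1 hB k
          exact ⟨k', hk', Or.inr hf⟩
      · intro h k hk
        have h' : clEval u A = false ∧ clEval u B = false := by simpa [clEval] using h
        exact hk.elim (ihA.2 h'.1 k) (ihB.2 h'.2 k)
  | imp A B ihA ihB =>
      constructor
      · intro h k
        refine ⟨k, W.le_refl k, ?_⟩
        rcases (by simpa [clEval] using h : clEval u A = false ∨ clEval u B = true) with hA | hB
        · intro k' _ hfA
          exact absurd hfA (ihA.2 hA k')
        · intro k' _ _
          obtain ⟨k'', hk'', hf⟩ := ihB.1 hB k'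
          exact ⟨k'', hk'', hf⟩
      · intro h k hk
        have h' : clEval u A = true ∧ clEval u B = false := by simpa [clEval] using h
        have hA : clEval u A = true := h'.1
        obtain ⟨k', hk', hfA⟩ := ihA.1 hA k
        obtain ⟨k'', _, hfB⟩ := hk k' hk' hfA
        exact ihB.2 h'.2 k'' hfB

/-- A one-node strict finitistic model built from a Boolean valuation with
finitely many true variables. -/
def unitModel (u : ℕ → Bool) (h : {p | u p = true}.Finite) : SFModel where
  K := Unit
  le _ _ := True
  le_refl _ := trivial
  le_antisymm _ _ _ _ := rfl
  le_trans _ _ _ _ _ := trivial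
  root := ()
  root_le _ := trivial
  pred_linear _ _ _ _ _ := Or.inl trivial
  finitely_branching _ := Set.toFinite _
  branches_countable C _ := C.to_countable
  val p := {_x | u p = true}
  val_up _ _ _ _ hk := hk
  fin_verif _ := by simpa using h
  atomic_prev p hp l := ⟨l, trivial, by obtain ⟨k, hk⟩ := hp; exact hk⟩

lemma unit_force (u : ℕ → Bool) (h : {p | u p = true}.Finite) (B : Fm) (k : Unit) :
    Force (unitModel u h) k B ↔ clEval u B = true := by
  induction B generalizing k with
  | bot => simp [Force, clEval]
  | var p => simp [Force, clEval, unitModel]; exact Iff.rfl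
  | and A B ihA ihB => simp [Force, clEval, ihA, ihB]
  | or A B ihA ihB => simp [Force, clEval, ihA, ihB]
  | imp A B ihA ihB =>
      constructor
      · intro hf
        simp only [clEval, Bool.or_eq_true, Bool.not_eq_true']
        by_cases hA : clEval u A = true
        · obtain ⟨k'', _, hfB⟩ := hf k trivial ((ihA k).2 hA)
          exact Or.inr ((ihB k'').1 hfB)
        · exact Or.inl (by simpa using hA)
      · intro hc k' _ hfA
        rcases (by simpa [clEval] using hc : clEval u A = false ∨ clEval u B = true) with hA | hB
        · exact absurd ((ihA k').1 hfA) (by simp [hA])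
        · exact ⟨k', trivial, (ihB k').2 hB⟩

/-- a formula is assertible in every strict finitistic model iff it
is a classical tautology. -/
theorem assertible_everywhere_iff_tautology (A : Fm) :
    (∀ W : SFModel, Assertible W A) ↔ (∀ u : ℕ → Bool, clEval u A = true) := by
  constructor
  · intro h u
    by_contra hne
    set u' : ℕ → Bool := fun p => u p && decide (p ∈ A.vars) with hu'
    have hfin : {p | u' p = true}.Finite := by
      apply Set.Finite.subset A.vars.finite_toSet
      intro p hp
      simp only [hu', Bool.and_eq_true, decide_eq_true_eq, Set.mem_setOf_eq] at hp
      exact hp.2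
    have hagree : clEval u A = clEval u' A :=
      clEval_congr u u' A (fun p hp => by simp [hu', hp])
    obtain ⟨k, hk⟩ := h (unitModel u' hfin)
    have : clEval u' A = true := (unit_force u' hfin A k).1 hk
    exact hne (hagree ▸ this)
  · intro h W
    set u : ℕ → Bool := fun p => decide (∃ k, k ∈ W.val p) with hu
    have hu' : ∀ p, u p = true ↔ ∃ k, k ∈ W.val p := by
      intro p; simp [hu]
    obtain ⟨k, _, hf⟩ := (key_prevalence W u hu' A).1 (h u) W.root
    exact ⟨k, hf⟩
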